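/- Let f be an amplitude vector with characteristic distribution p and Weyl distribution q. Then the following chain of inequalities holds (it connects the eighth power of the Gowers-3 norm of the state, which equals 2ⁿ·∑_x p(x)², to the second moment of Weyl-operator expectations under Bell difference sampling): (2ⁿ · ∑_{x ∈ 𝔽₂^{2n}} p(x)²)² ≤ ∑_{x ∈ 𝔽₂^{2n}} q(x) · 2ⁿ · p(x) ≤ 2ⁿ · ∑_{x ∈ 𝔽₂^{2n}} p(x)². -/

import Mathlib

open Finset

/-- The characteristic distribution of an amplitude vector `f : 𝔽₂ⁿ → ℂ`. -/
noncomputable def charDist (n : ℕ) (f : (Fin n → ZMod 2) → ℂ) :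
    (Fin n → ZMod 2) × (Fin n → ZMod 2) → ℝ :=
  fun x =>
    ((2 : ℝ) ^ n)⁻¹ *
      ‖∑ y : Fin n → ZMod 2,
          f y * (starRingEnd ℂ) (f (y + x.1)) *
            (-1 : ℂ) ^ (∑ i, x.2 i * y i : ZMod 2).val‖ ^ 2

/-- The Weyl distribution `q(x) = ∑_y p(y)·p(x+y)`. -/
noncomputable def weylDist (n : ℕ) (f : (Fin n → ZMod 2) → ℂ) :
    (Fin n → ZMod 2) × (Fin n → ZMod 2) → ℝ :=
  fun x => ∑ y : (Fin n → ZMod 2) × (Fin n → ZMod 2), charDist n f y * charDist n f (x + y)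


section Aux

variable {n : ℕ}

/-- inner product on 𝔽₂ⁿ -/
def ipAux (w y : Fin n → ZMod 2) : ZMod 2 := ∑ i, w i * y i

/-- complex sign character on ZMod 2 -/
noncomputable def chAux (a : ZMod 2) : ℂ := (-1 : ℂ) ^ a.val

lemma chAux_zero : chAux (0 : ZMod 2) = 1 := by simp [chAux]

lemma chAux_add (a b : ZMod 2) : chAux (a + b) = chAux a * chAux b := by
  simp only [chAux]; rw [ZMod.val_add, ← neg_one_pow_eq_pow_mod_two, pow_add]

lemma chAux_conj (a : ZMod 2) : (starRingEnd ℂ) (chAux a) = chAux a := by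
  simp [chAux]

lemma chAux_one : chAux (1 : ZMod 2) = -1 := by
  simp [chAux, show (1:ZMod 2).val = 1 from rfl]

lemma norm_chAux (a : ZMod 2) : ‖chAux a‖ = 1 := by simp [chAux]

lemma ipAux_add_left (a b y : Fin n → ZMod 2) :
    ipAux (a + b) y = ipAux a y + ipAux b y := by
  simp [ipAux, add_mul, Finset.sum_add_distrib]

lemma ipAux_add_right (a y z : Fin n → ZMod 2) :
    ipAux a (y + z) = ipAux a y + ipAux a z := by
  simp [ipAux, mul_add, Finset.sum_add_distrib]

lemma ipAux_comm (a b : Fin n → ZMod 2) : ipAux a b = ipAux b a := by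
  simp [ipAux, mul_comm]

lemma ipAux_zero_right (a : Fin n → ZMod 2) : ipAux a 0 = 0 := by simp [ipAux]

lemma negV (x : Fin n → ZMod 2) : -x = x := by
  funext i
  have : ∀ a : ZMod 2, -a = a := by decide
  exact this (x i)

lemma addV_self (x : Fin n → ZMod 2) : x + x = 0 := by
  nth_rewrite 2 [← negV x]; exact add_neg_cancel x

/-- orthogonality -/
lemma sum_chAux (t : Fin n → ZMod 2) :
    ∑ w : Fin n → ZMod 2, chAux (ipAux w t) = if t = 0 then (2:ℂ)^n else 0 := by
  by_cases ht : t = 0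
  · subst ht
    simp [ipAux_zero_right, chAux_zero, Finset.card_univ, ZMod.card]
  · simp only [ht, if_false]
    obtain ⟨i, hi⟩ : ∃ i, t i ≠ 0 := by
      by_contra h; push_neg at h; exact ht (funext h)
    have hti : t i = 1 := by
      have : ∀ a : ZMod 2, a ≠ 0 → a = 1 := by decide
      exact this _ hi
    set u : Fin n → ZMod 2 := Pi.single i 1 with hu
    have hiput : ipAux u t = 1 := by
      rw [ipAux]
      rw [Finset.sum_eq_single i]
      · simp [hu, hti]
      · intro j _ hj; simp [hu, Pi.single_eq_of_ne hj]
      · intro h; exact absurd (Finset.mem_univ i) h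
    have key : ∑ w : Fin n → ZMod 2, chAux (ipAux w t)
        = ∑ w : Fin n → ZMod 2, chAux (ipAux (w + u) t) :=
      (Fintype.sum_equiv (Equiv.addRight u) _ _ (fun w => rfl)).symm
    have : ∑ w : Fin n → ZMod 2, chAux (ipAux w t)
        = -∑ w : Fin n → ZMod 2, chAux (ipAux w t) := by
      nth_rewrite 1 [key]
      simp [ipAux_add_left, chAux_add, hiput, chAux_one, mul_neg_one]
    have h2 := add_eq_zero_iff_eq_neg.mpr this
    have : (2:ℂ) * ∑ w : Fin n → ZMod 2, chAux (ipAux w t) = 0 := by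
      rw [two_mul]; nth_rewrite 1 [this]; ring
    simpa using this

variable (f : (Fin n → ZMod 2) → ℂ)

/-- the characteristic function -/
noncomputable def cfAux (x : (Fin n → ZMod 2) × (Fin n → ZMod 2)) : ℂ :=
  ∑ y, f y * (starRingEnd ℂ) (f (y + x.1)) * chAux (ipAux x.2 y)

lemma charDist_eq (x : (Fin n → ZMod 2) × (Fin n → ZMod 2)) :
    charDist n f x = ((2:ℝ)^n)⁻¹ * ‖cfAux f x‖^2 := rfl

end Aux

section Key

variable {n : ℕ} (f : (Fin n → ZMod 2) → ℂ)

lemma addV_cancel_left (y u : Fin n → ZMod 2) : y + (y + u) = u := by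
  rw [← add_assoc, addV_self, zero_add]

lemma inner_w (b y z : Fin n → ZMod 2) :
    ∑ w : Fin n → ZMod 2, chAux (ipAux w y) * chAux (ipAux w z) * chAux (ipAux b w)
      = if z = y + b then (2:ℂ)^n else 0 := by
  have h1 : ∀ w : Fin n → ZMod 2,
      chAux (ipAux w y) * chAux (ipAux w z) * chAux (ipAux b w)
        = chAux (ipAux w (y + z + b)) := by
    intro w
    rw [ipAux_add_right, ipAux_add_right, chAux_add, chAux_add, ipAux_comm b w]
  rw [Finset.sum_congr rfl (fun w _ => h1 w), sum_chAux]
  congr 1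
  rw [eq_iff_iff]
  have hyzb : y + z + b = z + (y + b) := by abel
  rw [hyzb]
  constructor
  · intro h
    have := add_eq_zero_iff_eq_neg.mp h
    rwa [negV] at this
  · intro h
    rw [h, addV_self]

lemma keyC (a b : Fin n → ZMod 2) :
    ∑ x : (Fin n → ZMod 2) × (Fin n → ZMod 2),
        (cfAux f x * (starRingEnd ℂ) (cfAux f x)) * (chAux (ipAux a x.1) * chAux (ipAux b x.2))
      = (2:ℂ)^n * (cfAux f (b,a) * (starRingEnd ℂ) (cfAux f (b,a))) := by
  have conj_cf : ∀ x : (Fin n → ZMod 2) × (Fin n → ZMod 2),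
      (starRingEnd ℂ) (cfAux f x)
        = ∑ z, (starRingEnd ℂ) (f z) * f (z + x.1) * chAux (ipAux x.2 z) := by
    intro x
    rw [cfAux, map_sum]
    apply Finset.sum_congr rfl
    intro z _
    rw [map_mul, map_mul, chAux_conj, Complex.conj_conj]
  calc
    ∑ x : (Fin n → ZMod 2) × (Fin n → ZMod 2),
        (cfAux f x * (starRingEnd ℂ) (cfAux f x)) * (chAux (ipAux a x.1) * chAux (ipAux b x.2))
      = ∑ v : Fin n → ZMod 2, ∑ w : Fin n → ZMod 2, ∑ y : Fin n → ZMod 2, ∑ z : Fin n → ZMod 2,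
          (f y * (starRingEnd ℂ) (f (y + v)) * (starRingEnd ℂ) (f z) * f (z + v)
              * chAux (ipAux a v))
            * (chAux (ipAux w y) * chAux (ipAux w z) * chAux (ipAux b w)) := by
        rw [Fintype.sum_prod_type]
        apply Finset.sum_congr rfl; intro v _
        apply Finset.sum_congr rfl; intro w _
        rw [conj_cf, cfAux]
        simp only
        rw [Finset.sum_mul_sum, Finset.sum_mul]
        apply Finset.sum_congr rfl; intro y _
        rw [Finset.sum_mul]
        apply Finset.sum_congr rfl; intro z _
        ring
    _ = ∑ v : Fin n → ZMod 2, ∑ y : Fin n → ZMod 2, ∑ z : Fin n → ZMod 2,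
          (f y * (starRingEnd ℂ) (f (y + v)) * (starRingEnd ℂ) (f z) * f (z + v)
              * chAux (ipAux a v))
            * (if z = y + b then (2:ℂ)^n else 0) := by
        apply Finset.sum_congr rfl; intro v _
        rw [Finset.sum_comm]
        apply Finset.sum_congr rfl; intro y _
        rw [Finset.sum_comm]
        apply Finset.sum_congr rfl; intro z _
        rw [← Finset.mul_sum, inner_w]
    _ = ∑ v : Fin n → ZMod 2, ∑ y : Fin n → ZMod 2,
          (f y * (starRingEnd ℂ) (f (y + v)) * (starRingEnd ℂ) (f (y + b)) * f ((y + b) + v)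
              * chAux (ipAux a v)) * (2:ℂ)^n := by
        apply Finset.sum_congr rfl; intro v _
        apply Finset.sum_congr rfl; intro y _
        simp only [mul_ite, mul_zero, Finset.sum_ite_eq', Finset.mem_univ, if_true]
    _ = ∑ y : Fin n → ZMod 2, ∑ u : Fin n → ZMod 2,
          ((f y * (starRingEnd ℂ) (f (y + b)) * chAux (ipAux a y))
            * ((starRingEnd ℂ) (f u) * f (u + b) * chAux (ipAux a u))) * (2:ℂ)^n := by
        rw [Finset.sum_comm]
        apply Finset.sum_congr rfl; intro y _
        have hbij : Function.Bijective (fun u : Fin n → ZMod 2 => y + u) :=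
          Function.Involutive.bijective (fun u => addV_cancel_left y u)
        refine Fintype.sum_bijective _ hbij _ _ (fun u => ?_)
        have e3 : chAux (ipAux a (y + u)) = chAux (ipAux a y) * chAux (ipAux a u) := by
          rw [ipAux_add_right, chAux_add]
        have e5 : chAux (ipAux a y) * chAux (ipAux a y) = 1 := by
          rw [chAux, ← pow_add, ← two_mul, pow_mul]
          norm_num
        have e4 : y + u + b = y + b + u := by abel
        rw [e3, e4]
        linear_combination (- (f y * (starRingEnd ℂ) (f (y + u)) * (starRingEnd ℂ) (f (y + b))
          * f (y + b + u) * chAux (ipAux a u) * (2:ℂ)^n)) * e5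
    _ = (2:ℂ)^n * (cfAux f (b,a) * (starRingEnd ℂ) (cfAux f (b,a))) := by
        rw [conj_cf, cfAux]
        simp only
        rw [Finset.sum_mul_sum]
        rw [Finset.mul_sum]
        apply Finset.sum_congr rfl; intro y _
        rw [Finset.mul_sum]
        apply Finset.sum_congr rfl; intro u _
        ring

end Key

section RealSide

variable {n : ℕ} (f : (Fin n → ZMod 2) → ℂ)

/-- real sign character -/
noncomputable def rchAux (a : ZMod 2) : ℝ := (-1 : ℝ) ^ a.val

lemma rchAux_cast (a : ZMod 2) : ((rchAux a : ℝ) : ℂ) = chAux a := by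
  simp [rchAux, chAux]

lemma rchAux_zero : rchAux (0 : ZMod 2) = 1 := by simp [rchAux]

lemma rchAux_add (a b : ZMod 2) : rchAux (a + b) = rchAux a * rchAux b := by
  have := chAux_add a b
  rw [← rchAux_cast, ← rchAux_cast, ← rchAux_cast, ← Complex.ofReal_mul] at this
  exact_mod_cast this

lemma ipAux_zero_left (y : Fin n → ZMod 2) : ipAux 0 y = 0 := by simp [ipAux]

lemma dualR (a b : Fin n → ZMod 2) :
    ∑ x : (Fin n → ZMod 2) × (Fin n → ZMod 2),
        ‖cfAux f x‖^2 * (rchAux (ipAux a x.1) * rchAux (ipAux b x.2))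
      = 2^n * ‖cfAux f (b,a)‖^2 := by
  have hc : ∀ z : ℂ, z * (starRingEnd ℂ) z = ((‖z‖^2 : ℝ) : ℂ) := by
    intro z
    rw [Complex.mul_conj]
    norm_cast
    rw [Complex.normSq_eq_norm_sq]
  have key := keyC f a b
  have e : ∀ x : (Fin n → ZMod 2) × (Fin n → ZMod 2),
      (cfAux f x * (starRingEnd ℂ) (cfAux f x)) * (chAux (ipAux a x.1) * chAux (ipAux b x.2))
        = ((‖cfAux f x‖^2 * (rchAux (ipAux a x.1) * rchAux (ipAux b x.2)) : ℝ) : ℂ) := by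
    intro x
    rw [hc, ← rchAux_cast, ← rchAux_cast]
    push_cast
    ring
  rw [Finset.sum_congr rfl (fun x _ => e x), hc] at key
  exact_mod_cast key

lemma dualP (a b : Fin n → ZMod 2) :
    ∑ x : (Fin n → ZMod 2) × (Fin n → ZMod 2),
        charDist n f x * (rchAux (ipAux a x.1) * rchAux (ipAux b x.2))
      = 2^n * charDist n f (b,a) := by
  simp only [charDist_eq]
  calc ∑ x : (Fin n → ZMod 2) × (Fin n → ZMod 2),
        (((2:ℝ)^n)⁻¹ * ‖cfAux f x‖^2) * (rchAux (ipAux a x.1) * rchAux (ipAux b x.2))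
      = ((2:ℝ)^n)⁻¹ * ∑ x : (Fin n → ZMod 2) × (Fin n → ZMod 2),
          ‖cfAux f x‖^2 * (rchAux (ipAux a x.1) * rchAux (ipAux b x.2)) := by
        rw [Finset.mul_sum]
        apply Finset.sum_congr rfl; intro x _; ring
    _ = ((2:ℝ)^n)⁻¹ * ((2:ℝ)^n * ‖cfAux f (b,a)‖^2) := by rw [dualR]
    _ = (2:ℝ)^n * (((2:ℝ)^n)⁻¹ * ‖cfAux f (b,a)‖^2) := by ring

variable (hf : ∑ x : Fin n → ZMod 2, ‖f x‖ ^ 2 = 1)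
include hf

lemma cf_zero : cfAux f (0, 0) = 1 := by
  rw [cfAux]
  simp only [add_zero, ipAux_zero_left, chAux_zero, mul_one]
  have : ∀ y : Fin n → ZMod 2, f y * (starRingEnd ℂ) (f y) = ((‖f y‖^2 : ℝ) : ℂ) := by
    intro y
    rw [Complex.mul_conj]
    norm_cast
    rw [Complex.normSq_eq_norm_sq]
  rw [Finset.sum_congr rfl (fun y _ => this y), ← Complex.ofReal_sum, hf, Complex.ofReal_one]

lemma sum_p_one : ∑ x : (Fin n → ZMod 2) × (Fin n → ZMod 2), charDist n f x = 1 := by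
  have := dualP f 0 0
  simp only [ipAux_zero_left, rchAux_zero, mul_one] at this
  rw [this, charDist_eq, cf_zero f hf]
  simp

lemma p_nonneg (x : (Fin n → ZMod 2) × (Fin n → ZMod 2)) : 0 ≤ charDist n f x := by
  rw [charDist_eq]; positivity

omit hf in
lemma sum_shift (v : Fin n → ZMod 2) :
    ∑ y : Fin n → ZMod 2, ‖f (y + v)‖^2 = ∑ y : Fin n → ZMod 2, ‖f y‖^2 := by
  have hbij : Function.Bijective (fun u : Fin n → ZMod 2 => u + v) := by
    apply Function.Involutive.bijective
    intro u
    simp only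
    rw [add_assoc, addV_self, add_zero]
  exact Fintype.sum_bijective _ hbij (fun y => ‖f (y + v)‖^2) (fun y => ‖f y‖^2)
    (fun u => rfl)

lemma p_le (x : (Fin n → ZMod 2) × (Fin n → ZMod 2)) :
    charDist n f x ≤ ((2:ℝ)^n)⁻¹ := by
  rw [charDist_eq]
  have h1 : ‖cfAux f x‖ ≤ ∑ y : Fin n → ZMod 2, ‖f y‖ * ‖f (y + x.1)‖ := by
    rw [cfAux]
    refine le_trans (norm_sum_le _ _) (Finset.sum_le_sum fun y _ => ?_)
    rw [norm_mul, norm_mul, norm_chAux, mul_one, RCLike.norm_conj]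
  have h2 : (∑ y : Fin n → ZMod 2, ‖f y‖ * ‖f (y + x.1)‖)^2 ≤ 1 := by
    refine le_trans (Finset.sum_mul_sq_le_sq_mul_sq _ _ _) ?_
    rw [hf, sum_shift f x.1, hf]
    norm_num
  have h3 : ‖cfAux f x‖^2 ≤ 1 := by
    nlinarith [norm_nonneg (cfAux f x), Finset.sum_nonneg
      (fun y (_ : y ∈ Finset.univ) => mul_nonneg (norm_nonneg (f y)) (norm_nonneg (f (y + x.1))))]
  nlinarith [pow_pos (show (0:ℝ) < 2 by norm_num) n, h3,
    inv_pos.mpr (pow_pos (show (0:ℝ) < 2 by norm_num) n)]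

end RealSide

section TSum

variable {n : ℕ} (f : (Fin n → ZMod 2) → ℂ)

lemma inv_p (u : (Fin n → ZMod 2) × (Fin n → ZMod 2)) :
    charDist n f u = ((2:ℝ)^n)⁻¹ * ∑ x : (Fin n → ZMod 2) × (Fin n → ZMod 2),
        charDist n f x * (rchAux (ipAux u.2 x.1) * rchAux (ipAux u.1 x.2)) := by
  rw [dualP f u.2 u.1, Prod.mk.eta, ← mul_assoc,
    inv_mul_cancel₀ (pow_ne_zero n (two_ne_zero)), one_mul]

lemma hS (a : (Fin n → ZMod 2) × (Fin n → ZMod 2)) :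
    ∑ x : (Fin n → ZMod 2) × (Fin n → ZMod 2),
        charDist n f x * (rchAux (ipAux x.2 a.1) * rchAux (ipAux x.1 a.2))
      = 2^n * charDist n f a := by
  have h := dualP f a.2 a.1
  rw [Prod.mk.eta] at h
  rw [← h]
  apply Finset.sum_congr rfl; intro x _
  rw [ipAux_comm x.2 a.1, ipAux_comm x.1 a.2]
  ring

lemma hfact (A B : ((Fin n → ZMod 2) × (Fin n → ZMod 2)) → ℝ) (c : ℝ) :
    ∑ x : (Fin n → ZMod 2) × (Fin n → ZMod 2),
      ∑ y : (Fin n → ZMod 2) × (Fin n → ZMod 2), c * A x * B y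
      = c * (∑ x, A x) * (∑ y, B y) := by
  have h1 : ∀ x, ∑ y : (Fin n → ZMod 2) × (Fin n → ZMod 2), c * A x * B y
      = c * A x * ∑ y, B y := fun x => by rw [← Finset.mul_sum]
  rw [Finset.sum_congr rfl (fun x _ => h1 x), ← Finset.sum_mul, ← Finset.mul_sum]

lemma Tsum :
    ∑ x : (Fin n → ZMod 2) × (Fin n → ZMod 2),
      ∑ y : (Fin n → ZMod 2) × (Fin n → ZMod 2),
        charDist n f x * charDist n f y * charDist n f (x + y)
      = 2^n * ∑ a : (Fin n → ZMod 2) × (Fin n → ZMod 2), (charDist n f a)^3 := by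
  calc
    ∑ x : (Fin n → ZMod 2) × (Fin n → ZMod 2),
      ∑ y : (Fin n → ZMod 2) × (Fin n → ZMod 2),
        charDist n f x * charDist n f y * charDist n f (x + y)
      = ∑ x : (Fin n → ZMod 2) × (Fin n → ZMod 2),
          ∑ y : (Fin n → ZMod 2) × (Fin n → ZMod 2),
            ∑ a : (Fin n → ZMod 2) × (Fin n → ZMod 2),
              (((2:ℝ)^n)⁻¹ * charDist n f a)
                * (charDist n f x * (rchAux (ipAux x.2 a.1) * rchAux (ipAux x.1 a.2)))
                * (charDist n f y * (rchAux (ipAux y.2 a.1) * rchAux (ipAux y.1 a.2))) := by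
        apply Finset.sum_congr rfl; intro x _
        apply Finset.sum_congr rfl; intro y _
        rw [inv_p f (x + y)]
        simp only [Prod.fst_add, Prod.snd_add, ipAux_add_left, rchAux_add, Finset.mul_sum]
        apply Finset.sum_congr rfl; intro a _
        ring
    _ = ∑ a : (Fin n → ZMod 2) × (Fin n → ZMod 2),
          (((2:ℝ)^n)⁻¹ * charDist n f a)
            * (∑ x, charDist n f x * (rchAux (ipAux x.2 a.1) * rchAux (ipAux x.1 a.2)))
            * (∑ y, charDist n f y * (rchAux (ipAux y.2 a.1) * rchAux (ipAux y.1 a.2))) := by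
        conv_lhs => enter [2, x]; rw [Finset.sum_comm]
        rw [Finset.sum_comm]
        apply Finset.sum_congr rfl; intro a _
        exact hfact _ _ _
    _ = ∑ a : (Fin n → ZMod 2) × (Fin n → ZMod 2),
          (((2:ℝ)^n)⁻¹ * charDist n f a) * (2^n * charDist n f a) * (2^n * charDist n f a) := by
        apply Finset.sum_congr rfl; intro a _
        rw [hS f a]
    _ = 2^n * ∑ a : (Fin n → ZMod 2) × (Fin n → ZMod 2), (charDist n f a)^3 := by
        rw [Finset.mul_sum]
        apply Finset.sum_congr rfl; intro a _
        have h2 : ((2:ℝ)^n)⁻¹ * (2:ℝ)^n = 1 := inv_mul_cancel₀ (pow_ne_zero n two_ne_zero)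
        calc (((2:ℝ)^n)⁻¹ * charDist n f a) * (2^n * charDist n f a) * (2^n * charDist n f a)
            = (((2:ℝ)^n)⁻¹ * (2:ℝ)^n) * ((2:ℝ)^n * charDist n f a ^ 3) := by ring
          _ = 2^n * charDist n f a ^ 3 := by rw [h2, one_mul]

end TSum


/-- `(2ⁿ·∑ p²)² ≤ ∑ q·2ⁿ·p ≤ 2ⁿ·∑ p²`. -/
theorem stmt_4 (n : ℕ) (hn : 1 ≤ n) (f : (Fin n → ZMod 2) → ℂ)
    (hf : ∑ x : Fin n → ZMod 2, ‖f x‖ ^ 2 = 1) :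
    ((2 : ℝ) ^ n * ∑ x : (Fin n → ZMod 2) × (Fin n → ZMod 2), (charDist n f x) ^ 2) ^ 2 ≤
      (∑ x : (Fin n → ZMod 2) × (Fin n → ZMod 2),
          weylDist n f x * ((2 : ℝ) ^ n * charDist n f x)) ∧
    (∑ x : (Fin n → ZMod 2) × (Fin n → ZMod 2),
        weylDist n f x * ((2 : ℝ) ^ n * charDist n f x)) ≤
      (2 : ℝ) ^ n * ∑ x : (Fin n → ZMod 2) × (Fin n → ZMod 2), (charDist n f x) ^ 2 := by
  set p := charDist n f with hp
  have hM : (∑ x : (Fin n → ZMod 2) × (Fin n → ZMod 2),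
      weylDist n f x * ((2 : ℝ) ^ n * p x))
      = (2:ℝ)^n * ((2:ℝ)^n * ∑ a : (Fin n → ZMod 2) × (Fin n → ZMod 2), p a ^ 3) := by
    rw [← Tsum f]
    rw [Finset.mul_sum]
    apply Finset.sum_congr rfl; intro x _
    rw [weylDist, Finset.sum_mul, Finset.mul_sum]
    apply Finset.sum_congr rfl; intro y _
    ring
  have hpos : (0:ℝ) < 2^n := pow_pos (by norm_num) n
  have hinv : ((2:ℝ)^n)⁻¹ * (2:ℝ)^n = 1 := inv_mul_cancel₀ (ne_of_gt hpos)
  have hnn : ∀ a, 0 ≤ p a := fun a => p_nonneg f hf a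
  have hle : ∀ a, p a ≤ ((2:ℝ)^n)⁻¹ := fun a => p_le f hf a
  have hsum1 : ∑ a : (Fin n → ZMod 2) × (Fin n → ZMod 2), p a = 1 := sum_p_one f hf
  constructor
  · -- left inequality
    rw [hM]
    have cs := Finset.sum_mul_sq_le_sq_mul_sq Finset.univ
      (fun a : (Fin n → ZMod 2) × (Fin n → ZMod 2) => p a * Real.sqrt (p a))
      (fun a => Real.sqrt (p a))
    have e1 : ∑ a : (Fin n → ZMod 2) × (Fin n → ZMod 2),
        (p a * Real.sqrt (p a)) * Real.sqrt (p a) = ∑ a, p a ^ 2 := by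
      apply Finset.sum_congr rfl; intro a _
      rw [mul_assoc, Real.mul_self_sqrt (hnn a)]
      ring
    have e2 : ∑ a : (Fin n → ZMod 2) × (Fin n → ZMod 2),
        (p a * Real.sqrt (p a)) ^ 2 = ∑ a, p a ^ 3 := by
      apply Finset.sum_congr rfl; intro a _
      rw [mul_pow, Real.sq_sqrt (hnn a)]
      ring
    have e3 : ∑ a : (Fin n → ZMod 2) × (Fin n → ZMod 2),
        (Real.sqrt (p a)) ^ 2 = 1 := by
      rw [← hsum1]
      exact Finset.sum_congr rfl fun a _ => Real.sq_sqrt (hnn a)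
    rw [e1, e2, e3, mul_one] at cs
    calc ((2:ℝ)^n * ∑ x : (Fin n → ZMod 2) × (Fin n → ZMod 2), p x ^ 2) ^ 2
        = (2:ℝ)^n * ((2:ℝ)^n * (∑ x : (Fin n → ZMod 2) × (Fin n → ZMod 2), p x ^ 2)^2) := by
          ring
      _ ≤ (2:ℝ)^n * ((2:ℝ)^n * ∑ a : (Fin n → ZMod 2) × (Fin n → ZMod 2), p a ^ 3) := by
          apply mul_le_mul_of_nonneg_left _ (le_of_lt hpos)
          exact mul_le_mul_of_nonneg_left cs (le_of_lt hpos)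
  · -- right inequality
    rw [hM]
    have key : (2:ℝ)^n * ∑ a : (Fin n → ZMod 2) × (Fin n → ZMod 2), p a ^ 3
        ≤ ∑ a : (Fin n → ZMod 2) × (Fin n → ZMod 2), p a ^ 2 := by
      rw [Finset.mul_sum]
      apply Finset.sum_le_sum
      intro a _
      have h1 : p a * (2:ℝ)^n ≤ 1 := by
        calc p a * (2:ℝ)^n ≤ ((2:ℝ)^n)⁻¹ * (2:ℝ)^n :=
              mul_le_mul_of_nonneg_right (hle a) (le_of_lt hpos)
          _ = 1 := hinv
      calc (2:ℝ)^n * p a ^ 3 = (p a * (2:ℝ)^n) * p a ^ 2 := by ring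
        _ ≤ 1 * p a ^ 2 := mul_le_mul_of_nonneg_right h1 (by positivity)
        _ = p a ^ 2 := one_mul _
    exact mul_le_mul_of_nonneg_left key (le_of_lt hpos)
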